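/- For any real constants ħ ≠ 0, α₆, α₇ and ε with ε² = 1, the function V₁(r) = 5ħ/(2r²) + 3ħα₆ + εħ/(r²√(2 + α₇ħ²r²)), defined for r > 0 (with 2 + α₇ħ²r² > 0), satisfies the nonlinear ordinary differential equation ħ³(115 + 414α₆r² + 540α₆²r⁴ + 216α₆³r⁶) − 6ħ²r²(23 + 60α₆r² + 36α₆²r⁴)V₁ + 12ħr⁴(5 + 6α₆r²)V₁² − 8r⁶V₁³ + 4ħ²r³V₁' = 0. -/

import Mathlib

/-!
Subtracting the explicit part `5ħ/(2r²) + 3ħα₆` from `V₁` turns the cubic equation, after division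
by `4r²`, into the Bernoulli equation `ħ²(r w' + 3w) = 2r⁴w³` for the remainder `w`. In terms of
`z = r³w` this reads `ħ² z' = 2z³/r³`, which is solved by `z = εħ r / √(2 + α₇ħ²r²)` because
`ε² = 1`.
-/

noncomputable def radialCorrection (c β r : ℝ) : ℝ :=
  c / (r ^ 2 * Real.sqrt (2 + β * r ^ 2))

theorem hasDerivAt_radialCorrection (c β : ℝ) {r : ℝ} (hr : r ≠ 0) (hq : 0 < 2 + β * r ^ 2) :
    HasDerivAt (radialCorrection c β)
      (-c * (4 + 3 * β * r ^ 2) / (r ^ 3 * Real.sqrt (2 + β * r ^ 2) ^ 3)) r := by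
  have hs : 0 < Real.sqrt (2 + β * r ^ 2) := Real.sqrt_pos.mpr hq
  have hs2 : Real.sqrt (2 + β * r ^ 2) ^ 2 = 2 + β * r ^ 2 := Real.sq_sqrt hq.le
  have hq' : HasDerivAt (fun x : ℝ => 2 + β * x ^ 2) (β * (2 * r)) r := by
    simpa using ((hasDerivAt_pow 2 r).const_mul β).const_add 2
  have hden := (hasDerivAt_pow 2 r).fun_mul (hq'.sqrt hq.ne')
  refine ((hasDerivAt_const r c).fun_div hden (by positivity)).congr_deriv ?_
  simp only [Nat.cast_ofNat, Nat.reduceSub, pow_one]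
  generalize Real.sqrt (2 + β * r ^ 2) = s at hs hs2 ⊢
  field_simp
  linear_combination (-2 * c) * hs2

theorem radialCorrection_bernoulli {c β k r : ℝ} (hc : c ^ 2 = k) (hr : r ≠ 0)
    (hq : 0 < 2 + β * r ^ 2) :
    k * (r * deriv (radialCorrection c β) r + 3 * radialCorrection c β r) =
      2 * r ^ 4 * radialCorrection c β r ^ 3 := by
  have hs : 0 < Real.sqrt (2 + β * r ^ 2) := Real.sqrt_pos.mpr hq
  have hs2 : Real.sqrt (2 + β * r ^ 2) ^ 2 = 2 + β * r ^ 2 := Real.sq_sqrt hq.le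
  rw [(hasDerivAt_radialCorrection c β hr hq).deriv, radialCorrection, ← hc]
  generalize Real.sqrt (2 + β * r ^ 2) = s at hs hs2 ⊢
  field_simp
  linear_combination (3 * c ^ 3) * hs2

theorem cubic_ode_eq_bernoulli (hbar α₆ r w w' : ℝ) (hr : r ≠ 0) :
    let V := 5 * hbar / (2 * r ^ 2) + 3 * hbar * α₆ + w
    hbar ^ 3 * (115 + 414 * α₆ * r ^ 2 + 540 * α₆ ^ 2 * r ^ 4 + 216 * α₆ ^ 3 * r ^ 6)
        - 6 * hbar ^ 2 * r ^ 2 * (23 + 60 * α₆ * r ^ 2 + 36 * α₆ ^ 2 * r ^ 4) * V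
        + 12 * hbar * r ^ 4 * (5 + 6 * α₆ * r ^ 2) * V ^ 2
        - 8 * r ^ 6 * V ^ 3
        + 4 * hbar ^ 2 * r ^ 3 * (-(5 * hbar) / r ^ 3 + w') =
      4 * r ^ 2 * (hbar ^ 2 * (r * w' + 3 * w) - 2 * r ^ 4 * w ^ 3) := by
  intro V
  simp only [V]
  field_simp
  ring

theorem hasDerivAt_const_div_two_mul_sq (a : ℝ) {r : ℝ} (hr : r ≠ 0) :
    HasDerivAt (fun x : ℝ => a / (2 * x ^ 2)) (-a / r ^ 3) r := by
  refine ((hasDerivAt_const r a).fun_div ((hasDerivAt_pow 2 r).const_mul 2)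
    (by positivity)).congr_deriv ?_
  field_simp
  ring

theorem explicit_V1_solves_ode_general (hbar α₆ α₇ ε : ℝ) (hε : ε ^ 2 = 1)
    (I : Set ℝ) (hIpos : I ⊆ Set.Ioi (0 : ℝ))
    (hI : ∀ r ∈ I, 0 < 2 + α₇ * hbar ^ 2 * r ^ 2) :
    let V₁ : ℝ → ℝ := fun r =>
      5 * hbar / (2 * r ^ 2) + 3 * hbar * α₆ +
        ε * hbar / (r ^ 2 * Real.sqrt (2 + α₇ * hbar ^ 2 * r ^ 2))
    ∀ r ∈ I,
      hbar ^ 3 * (115 + 414 * α₆ * r ^ 2 + 540 * α₆ ^ 2 * r ^ 4 + 216 * α₆ ^ 3 * r ^ 6)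
        - 6 * hbar ^ 2 * r ^ 2 * (23 + 60 * α₆ * r ^ 2 + 36 * α₆ ^ 2 * r ^ 4) * V₁ r
        + 12 * hbar * r ^ 4 * (5 + 6 * α₆ * r ^ 2) * V₁ r ^ 2
        - 8 * r ^ 6 * V₁ r ^ 3
        + 4 * hbar ^ 2 * r ^ 3 * deriv V₁ r = 0 := by
  intro V₁ r hr
  have hr0 : r ≠ 0 := (hIpos hr).ne'
  have hq : 0 < 2 + α₇ * hbar ^ 2 * r ^ 2 := hI r hr
  set w := radialCorrection (ε * hbar) (α₇ * hbar ^ 2)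
  have hw : HasDerivAt w (deriv w r) r :=
    (hasDerivAt_radialCorrection _ _ hr0 hq).differentiableAt.hasDerivAt
  have hV₁ : HasDerivAt V₁ (-(5 * hbar) / r ^ 3 + deriv w r) r :=
    ((hasDerivAt_const_div_two_mul_sq (5 * hbar) hr0).add_const (3 * hbar * α₆)).fun_add hw
  have hbernoulli : hbar ^ 2 * (r * deriv w r + 3 * w r) = 2 * r ^ 4 * w r ^ 3 :=
    radialCorrection_bernoulli (by rw [mul_pow, hε, one_mul]) hr0 hq
  rw [hV₁.deriv]
  exact (cubic_ode_eq_bernoulli hbar α₆ r (w r) (deriv w r) hr0).trans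
    (by rw [hbernoulli, sub_self, mul_zero])

/-- The explicit potential
`V₁(r) = 5ħ/(2r²) + 3ħα₆ + εħ/(r²√(2 + α₇ħ²r²))`
satisfies the nonlinear ODE
`ħ³(115 + 414α₆r² + 540α₆²r⁴ + 216α₆³r⁶) − 6ħ²r²(23 + 60α₆r² + 36α₆²r⁴)V₁`
`+ 12ħr⁴(5 + 6α₆r²)V₁² − 8r⁶V₁³ + 4ħ²r³V₁' = 0`
on any open interval `I ⊆ (0,∞)` where `2 + α₇ħ²r² > 0`. -/
theorem explicit_V1_solves_ode (hbar α₆ α₇ ε : ℝ) (hb : hbar ≠ 0) (hε : ε ^ 2 = 1)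
    (I : Set ℝ) (hIopen : IsOpen I) (hIpos : I ⊆ Set.Ioi (0 : ℝ))
    (hI : ∀ r ∈ I, 0 < 2 + α₇ * hbar ^ 2 * r ^ 2) :
    let V₁ : ℝ → ℝ := fun r =>
      5 * hbar / (2 * r ^ 2) + 3 * hbar * α₆ +
        ε * hbar / (r ^ 2 * Real.sqrt (2 + α₇ * hbar ^ 2 * r ^ 2))
    ∀ r ∈ I,
      hbar ^ 3 * (115 + 414 * α₆ * r ^ 2 + 540 * α₆ ^ 2 * r ^ 4 + 216 * α₆ ^ 3 * r ^ 6)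
        - 6 * hbar ^ 2 * r ^ 2 * (23 + 60 * α₆ * r ^ 2 + 36 * α₆ ^ 2 * r ^ 4) * V₁ r
        + 12 * hbar * r ^ 4 * (5 + 6 * α₆ * r ^ 2) * V₁ r ^ 2
        - 8 * r ^ 6 * V₁ r ^ 3
        + 4 * hbar ^ 2 * r ^ 3 * deriv V₁ r = 0 :=
  explicit_V1_solves_ode_general hbar α₆ α₇ ε hε I hIpos hI
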